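/- For relatively prime positive integers m and n, the Lissajous–Chebyshev node set LC_{m,n} contains exactly (m+1)(n+1)/2 distinct points and admits the representation LC_{m,n} = {(cos(iπ/m), cos(jπ/n)) : (i, j) ∈ I_{m,n}}, where I_{m,n} = {(i, j) ∈ ℤ² : 0 ≤ i ≤ m, 0 ≤ j ≤ n, i + j ≡ 0 (mod 2)}. -/

import Mathlib

/-!
After the substitution `t = πk/(mn)` the node `γ_{m,n}(t)` is `(cos(kπ/m), cos(kπ/n))`. Since
`k ↦ cos(kπ/m)` is `2m`-periodic and even, `k` may be folded into `[0, m]` without changing its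
parity, which puts every node on the grid `I_{m,n}`. Conversely, as `gcd(2m, 2n) = 2`, the
Chinese remainder theorem gives `k < 2mn` with `k ≡ i (mod 2m)` and `k ≡ j (mod 2n)` whenever
`i ≡ j (mod 2)`, and `k ↦ 2mn - k` moves it into `[0, mn]`. Grid points are distinct because
`cos` is injective on `[0, π]`, and one of `m`, `n` is odd, so reflecting that coordinate swaps
the parity of `i + j` and exactly half of the `(m+1)(n+1)` pairs lie in `I_{m,n}`.
-/

open Real Finset

theorem cos_nat_mod_mul_pi_div (m a : ℕ) : cos (↑(a % (2 * m)) * π / m) = cos (a * π / m) := by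
  rcases eq_or_ne m 0 with rfl | hm
  · simp
  conv_rhs => rw [← Nat.mod_add_div a (2 * m)]
  rw [show (↑(a % (2 * m) + 2 * m * (a / (2 * m))) : ℝ) * π / m
      = ↑(a % (2 * m)) * π / m + ↑(a / (2 * m)) * (2 * π) by push_cast; field_simp,
    cos_add_nat_mul_two_pi]

theorem cos_nat_mul_pi_div_congr {m a b : ℕ} (h : a ≡ b [MOD 2 * m]) :
    cos (a * π / m) = cos (b * π / m) := by
  rw [← cos_nat_mod_mul_pi_div, show a % (2 * m) = b % (2 * m) from h, cos_nat_mod_mul_pi_div]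

theorem cos_nat_sub_mul_pi_div {m N k : ℕ} (hN : m ∣ N) (hk : k ≤ 2 * N) :
    cos (↑(2 * N - k) * π / m) = cos (k * π / m) := by
  obtain ⟨c, rfl⟩ := hN
  rcases eq_or_ne m 0 with rfl | hm
  · simp
  rw [Nat.cast_sub hk, show ((↑(2 * (m * c)) : ℝ) - k) * π / m = c * (2 * π) - k * π / m by
    push_cast; field_simp, cos_nat_mul_two_pi_sub]

theorem injOn_cos_nat_mul_pi_div (m : ℕ) :
    Set.InjOn (fun i : ℕ => cos (i * π / m)) (Set.Iic m) := by
  rcases Nat.eq_zero_or_pos m with rfl | hm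
  · intro a ha b hb _
    simp_all
  have mem_Icc : ∀ c ∈ Set.Iic m, (c : ℝ) * π / m ∈ Set.Icc 0 π := fun c hc =>
    ⟨by positivity, div_le_of_le_mul₀ (by positivity) pi_pos.le
      (by rw [mul_comm]; gcongr; exact_mod_cast hc)⟩
  intro a ha b hb h
  have := injOn_cos (mem_Icc a ha) (mem_Icc b hb) h
  field_simp at this
  exact_mod_cast this

theorem exists_le_cos_nat_mul_pi_div_eq {m : ℕ} (hm : 0 < m) (k : ℕ) :
    ∃ i ≤ m, i ≡ k [MOD 2] ∧ cos (i * π / m) = cos (k * π / m) := by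
  have hr : k % (2 * m) < 2 * m := Nat.mod_lt _ (by omega)
  have hpar : k % (2 * m) ≡ k [MOD 2] := (Nat.mod_modEq k _).of_mul_right m
  rcases le_or_gt (k % (2 * m)) m with hle | hgt
  · exact ⟨k % (2 * m), hle, hpar, cos_nat_mod_mul_pi_div m k⟩
  · refine ⟨2 * m - k % (2 * m), by omega, ?_, ?_⟩
    · unfold Nat.ModEq at hpar ⊢
      omega
    · rw [cos_nat_sub_mul_pi_div dvd_rfl hr.le, cos_nat_mod_mul_pi_div]

theorem exists_le_mul_cos_nat_mul_pi_div_eq {m n i j : ℕ} (hm : 0 < m) (hn : 0 < n)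
    (hmn : m.Coprime n) (hij : i ≡ j [MOD 2]) :
    ∃ k ≤ m * n, cos (k * π / m) = cos (i * π / m) ∧ cos (k * π / n) = cos (j * π / n) := by
  have hgcd : Nat.gcd (2 * m) (2 * n) = 2 := by rw [Nat.gcd_mul_left, hmn.gcd_eq_one, mul_one]
  have hlcm : Nat.lcm (2 * m) (2 * n) = 2 * (m * n) := by
    rw [Nat.lcm_mul_left, hmn.lcm_eq_mul]
  have hij' : i ≡ j [MOD Nat.gcd (2 * m) (2 * n)] := by rwa [hgcd]
  set k := Nat.chineseRemainder' hij'
  have hk : (k : ℕ) < 2 * (m * n) := hlcm ▸ Nat.chineseRemainder'_lt_lcm hij' (by omega) (by omega)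
  rcases le_or_gt (k : ℕ) (m * n) with hle | hgt
  · exact ⟨k, hle, cos_nat_mul_pi_div_congr k.2.1, cos_nat_mul_pi_div_congr k.2.2⟩
  · refine ⟨2 * (m * n) - k, by omega, ?_, ?_⟩
    · rw [cos_nat_sub_mul_pi_div (dvd_mul_right m n) hk.le, cos_nat_mul_pi_div_congr k.2.1]
    · rw [cos_nat_sub_mul_pi_div (dvd_mul_left n m) hk.le, cos_nat_mul_pi_div_congr k.2.2]

def lissajousIndex (m n : ℕ) : Finset (ℕ × ℕ) := {p ∈ Iic m ×ˢ Iic n | (p.1 + p.2) % 2 = 0}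

theorem card_lissajousIndex_of_odd_left {m : ℕ} (hm : Odd m) (n : ℕ) :
    #(lissajousIndex m n) = (m + 1) * (n + 1) / 2 := by
  have hsum : #(lissajousIndex m n) + #{p ∈ Iic m ×ˢ Iic n | ¬(p.1 + p.2) % 2 = 0} =
      (m + 1) * (n + 1) := by
    rw [lissajousIndex, card_filter_add_card_filter_not, card_product, Nat.card_Iic, Nat.card_Iic]
  have hswap : #(lissajousIndex m n) = #{p ∈ Iic m ×ˢ Iic n | ¬(p.1 + p.2) % 2 = 0} := by
    obtain ⟨r, rfl⟩ := hm
    refine card_nbij' (fun p => (2 * r + 1 - p.1, p.2)) (fun p => (2 * r + 1 - p.1, p.2))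
      ?_ ?_ ?_ ?_ <;>
    · rintro ⟨a, b⟩ hp
      simp only [lissajousIndex, coe_filter, mem_product, mem_Iic, Set.mem_ofPred_eq,
        Prod.mk.injEq, and_true] at hp ⊢
      omega
  omega

theorem card_lissajousIndex {m n : ℕ} (hmn : m.Coprime n) :
    #(lissajousIndex m n) = (m + 1) * (n + 1) / 2 := by
  have hodd : Odd m ∨ Odd n := by
    by_contra! h
    simp only [Nat.not_odd_iff_even, even_iff_two_dvd] at h
    exact absurd (Nat.eq_one_of_dvd_coprimes hmn h.1 h.2) (by norm_num)
  rcases hodd with hm | hn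
  · exact card_lissajousIndex_of_odd_left hm n
  · have : lissajousIndex m n = (lissajousIndex n m).map (Equiv.prodComm ℕ ℕ).toEmbedding := by
      ext ⟨a, b⟩
      simp only [lissajousIndex, mem_map_equiv, mem_filter, mem_product, mem_Iic,
        Equiv.prodComm_symm, Equiv.prodComm_apply, Prod.swap_prod_mk]
      omega
    rw [this, card_map, card_lissajousIndex_of_odd_left hn, mul_comm]

noncomputable def lissajousCurve (m n : ℕ) (t : ℝ) : ℝ × ℝ := (cos (n * t), cos (m * t))

noncomputable def lissajousNode (m n k : ℕ) : ℝ × ℝ := lissajousCurve m n (π * k / (m * n))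

noncomputable def chebyshevGridPoint (m n : ℕ) (p : ℕ × ℕ) : ℝ × ℝ :=
  (cos (p.1 * π / m), cos (p.2 * π / n))

theorem lissajousNode_eq {m n : ℕ} (hm : m ≠ 0) (hn : n ≠ 0) (k : ℕ) :
    lissajousNode m n k = chebyshevGridPoint m n (k, k) := by
  simp only [lissajousNode, lissajousCurve, chebyshevGridPoint]
  congr 2 <;> field_simp

theorem injOn_chebyshevGridPoint (m n : ℕ) :
    Set.InjOn (chebyshevGridPoint m n) (lissajousIndex m n) := by
  rintro ⟨a, b⟩ hab ⟨c, d⟩ hcd h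
  simp only [lissajousIndex, coe_filter, mem_product, mem_Iic, Set.mem_ofPred_eq] at hab hcd
  simp only [chebyshevGridPoint, Prod.mk.injEq] at h ⊢
  exact ⟨injOn_cos_nat_mul_pi_div m hab.1.1 hcd.1.1 h.1,
    injOn_cos_nat_mul_pi_div n hab.1.2 hcd.1.2 h.2⟩

theorem setOf_lissajousNode_eq {m n : ℕ} (hm : 0 < m) (hn : 0 < n) (hmn : m.Coprime n) :
    {q | ∃ k ≤ m * n, q = lissajousNode m n k} =
      chebyshevGridPoint m n '' lissajousIndex m n := by
  ext q
  simp only [Set.mem_ofPred_eq, Set.mem_image, lissajousIndex, coe_filter, mem_product, mem_Iic,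
    lissajousNode_eq hm.ne' hn.ne', Prod.exists]
  constructor
  · rintro ⟨k, -, rfl⟩
    obtain ⟨i, hi, hik, hci⟩ := exists_le_cos_nat_mul_pi_div_eq hm k
    obtain ⟨j, hj, hjk, hcj⟩ := exists_le_cos_nat_mul_pi_div_eq hn k
    refine ⟨i, j, ⟨⟨hi, hj⟩, ?_⟩, by simp only [chebyshevGridPoint, hci, hcj]⟩
    unfold Nat.ModEq at hik hjk
    omega
  · rintro ⟨i, j, ⟨-, hij⟩, rfl⟩
    obtain ⟨k, hk, hci, hcj⟩ :=
      exists_le_mul_cos_nat_mul_pi_div_eq (i := i) (j := j) hm hn hmn (by unfold Nat.ModEq; omega)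
    exact ⟨k, hk, by simp only [chebyshevGridPoint, hci, hcj]⟩

theorem image_chebyshevGridPoint_lissajousIndex (m n : ℕ) :
    chebyshevGridPoint m n '' lissajousIndex m n =
      {q | ∃ i j : ℕ, i ≤ m ∧ j ≤ n ∧ (i + j) % 2 = 0 ∧
        q = (cos (i * π / m), cos (j * π / n))} := by
  ext q
  simp only [Set.mem_image, lissajousIndex, coe_filter, mem_product, mem_Iic, Set.mem_ofPred_eq,
    Prod.exists, chebyshevGridPoint, and_assoc, eq_comm (a := q)]

/-- Proposition 3.1: the Lissajous–Chebyshev node set `LC_{m,n}` consists of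
`(m+1)(n+1)/2` distinct points and equals `{(cos(iπ/m), cos(jπ/n)) : (i,j) ∈ I_{m,n}}`. -/
theorem stmt_2 (m n : ℕ) (hm : 0 < m) (hn : 0 < n) (hmn : Nat.Coprime m n) :
    ({q : ℝ × ℝ | ∃ k : ℕ, k ≤ m * n ∧
        q = (Real.cos (n * (π * k / (m * n))), Real.cos (m * (π * k / (m * n))))} =
      {q : ℝ × ℝ | ∃ i j : ℕ, i ≤ m ∧ j ≤ n ∧ (i + j) % 2 = 0 ∧
        q = (Real.cos (i * π / m), Real.cos (j * π / n))}) ∧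
    Set.ncard {q : ℝ × ℝ | ∃ k : ℕ, k ≤ m * n ∧
        q = (Real.cos (n * (π * k / (m * n))), Real.cos (m * (π * k / (m * n))))} =
      (m + 1) * (n + 1) / 2 := by
  have hnodes := setOf_lissajousNode_eq hm hn hmn
  refine ⟨hnodes.trans (image_chebyshevGridPoint_lissajousIndex m n), ?_⟩
  change Set.ncard {q | ∃ k ≤ m * n, q = lissajousNode m n k} = _
  rw [hnodes, ← coe_image, Set.ncard_coe_finset, card_image_of_injOn (injOn_chebyshevGridPoint m n),
    card_lissajousIndex hmn]
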